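/- Let R_D^{y,a}(f) = E_D[f(X)_1 | Y=y, A=a] with 0 ≤ f(X)_1 ≤ 1. Then for any two domains D_i, D_j and any y,a ∈ {0,1}: R_{D_j}^{y,a}(f) ≤ R_{D_i}^{y,a}(f) + √2 · d_JS(P_{D_j}^{X|Y=y,A=a}, P_{D_i}^{X|Y=y,A=a}). -/

import Mathlib

open MeasureTheory ProbabilityTheory Real
open scoped ENNReal

/-- Kullback–Leibler divergence (natural log), as a real number. -/
noncomputable def klDiv {α : Type*} [MeasurableSpace α] (P Q : Measure α) : ℝ :=
  ∫ x, Real.log ((P.rnDeriv Q) x).toReal ∂P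

/-- The midpoint (mixture) measure (P + Q)/2. -/
noncomputable def midM {α : Type*} [MeasurableSpace α] (P Q : Measure α) : Measure α :=
  (2⁻¹ : ℝ≥0∞) • (P + Q)

/-- Jensen–Shannon divergence. -/
noncomputable def jsDiv {α : Type*} [MeasurableSpace α] (P Q : Measure α) : ℝ :=
  2⁻¹ * klDiv P (midM P Q) + 2⁻¹ * klDiv Q (midM P Q)

/-- Jensen–Shannon distance. -/
noncomputable def jsDist {α : Type*} [MeasurableSpace α] (P Q : Measure α) : ℝ :=
  Real.sqrt (jsDiv P Q)

/-!
Let `M = (P + Q) / 2` and `g = dP/dM`, so that `dQ/dM = 2 - g` and `0 ≤ g ≤ 2`.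
For `0 ≤ f ≤ 1`, `∫ f dP - ∫ f dQ = ∫ 2 f (g - 1) dM ≤ ∫ |g - 1| dM`, the total variation
distance of `P` and `Q`. By Cauchy–Schwarz its square is at most `∫ (g - 1)² dM`, and the
elementary inequality `u² ≤ (1 + u) log (1 + u) + (1 - u) log (1 - u)` on `[-1, 1]` bounds
this by `KL(P ‖ M) + KL(Q ‖ M) = 2 JS(P, Q)`.
-/

open Set
open InformationTheory (klFun hasDerivAt_klFun klFun_one)

lemma sq_le_klFun_one_add_add_klFun_one_sub {u : ℝ} (hu : |u| ≤ 1) :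
    u ^ 2 ≤ klFun (1 + u) + klFun (1 - u) := by
  wlog hu0 : 0 ≤ u generalizing u
  · have := this (u := -u) (by rwa [abs_neg]) (by linarith)
    rwa [neg_sq, ← sub_eq_add_neg, sub_neg_eq_add, add_comm (klFun _)] at this
  set F : ℝ → ℝ := fun v => klFun (1 + v) + klFun (1 - v) - v ^ 2
  have hF_deriv :
      ∀ v ∈ Ioo (0 : ℝ) 1, HasDerivAt F (log (1 + v) - log (1 - v) - 2 * v) v := by
    intro v hv
    have h1 := (hasDerivAt_klFun (x := 1 + v) (by linarith [hv.1])).comp v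
      ((hasDerivAt_id v).const_add 1)
    have h2 := (hasDerivAt_klFun (x := 1 - v) (by linarith [hv.2])).comp v
      ((hasDerivAt_id v).const_sub 1)
    exact ((h1.add h2).sub (hasDerivAt_pow 2 v)).congr_deriv (by norm_num; ring)
  have hF : MonotoneOn F (Icc 0 1) := by
    refine monotoneOn_of_deriv_nonneg (convex_Icc 0 1) (by fun_prop) ?_ ?_
    · intro v hv
      rw [interior_Icc] at hv
      exact (hF_deriv v hv).differentiableAt.differentiableWithinAt
    · intro v hv
      rw [interior_Icc] at hv
      rw [(hF_deriv v hv).deriv, sub_nonneg]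
      -- `2 v` is the first term of `log (1 + v) - log (1 - v) = ∑ 2 v ^ (2k+1) / (2k+1)`
      have hv1 : |v| < 1 := abs_lt.2 ⟨by linarith [hv.1], hv.2⟩
      simpa using le_hasSum (hasSum_log_sub_log_of_abs_lt_one hv1) 0
        (fun k _ => by have := hv.1.le; positivity)
  have := hF ⟨le_rfl, zero_le_one⟩ ⟨hu0, (le_abs_self u).trans hu⟩ hu0
  simp only [F, add_zero, sub_zero, klFun_one] at this
  linarith

section

variable {α : Type*} [MeasurableSpace α]

lemma integrable_comp_of_ae_mem_Icc {μ : Measure α} [IsFiniteMeasure μ] {φ : ℝ → ℝ}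
    (hφ : Continuous φ) {g : α → ℝ} (hg : AEStronglyMeasurable g μ) {a b : ℝ}
    (hab : ∀ᵐ x ∂μ, g x ∈ Icc a b) : Integrable (fun x => φ (g x)) μ := by
  obtain ⟨C, hC⟩ := isCompact_Icc.exists_bound_of_continuousOn hφ.continuousOn
  exact .of_bound (hφ.comp_aestronglyMeasurable hg) C (hab.mono fun x hx => hC _ hx)

lemma sq_integral_le_integral_sq {μ : Measure α} [IsProbabilityMeasure μ] {X : α → ℝ}
    (hX : MemLp X 2 μ) : (∫ x, X x ∂μ) ^ 2 ≤ ∫ x, X x ^ 2 ∂μ := by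
  have := variance_nonneg X μ
  rwa [variance_eq_sub hX, sub_nonneg] at this

lemma klDiv_eq_integral_mul_log {P M : Measure α} [SigmaFinite P] [SigmaFinite M]
    (h : P ≪ M) :
    klDiv P M = ∫ x, (P.rnDeriv M x).toReal * log (P.rnDeriv M x).toReal ∂M :=
  (integral_toReal_rnDeriv_mul h).symm

variable (P Q : Measure α)

lemma midM_comm : midM P Q = midM Q P := by rw [midM, midM, add_comm]

lemma absolutelyContinuous_midM_left : P ≪ midM P Q :=
  (Measure.AbsolutelyContinuous.rfl.add_right Q).trans
    (Measure.absolutelyContinuous_smul (by simp))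

lemma absolutelyContinuous_midM_right : Q ≪ midM P Q :=
  midM_comm P Q ▸ absolutelyContinuous_midM_left Q P

lemma two_smul_midM : (2 : ℝ≥0∞) • midM P Q = P + Q := by
  rw [midM, smul_smul, ENNReal.mul_inv_cancel two_ne_zero ENNReal.ofNat_ne_top, one_smul]

instance [IsFiniteMeasure P] [IsFiniteMeasure Q] : IsFiniteMeasure (midM P Q) :=
  ⟨by simp [midM, ENNReal.mul_lt_top, measure_lt_top]⟩

instance [IsProbabilityMeasure P] [IsProbabilityMeasure Q] : IsProbabilityMeasure (midM P Q) :=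
  ⟨by simp [midM, ← two_mul, ENNReal.mul_inv_cancel]⟩

lemma toReal_rnDeriv_midM_add [IsFiniteMeasure P] [IsFiniteMeasure Q] :
    ∀ᵐ x ∂midM P Q,
      (P.rnDeriv (midM P Q) x).toReal + (Q.rnDeriv (midM P Q) x).toReal = 2 := by
  have hsum := Measure.rnDeriv_add P Q (midM P Q)
  rw [← two_smul_midM] at hsum
  filter_upwards [hsum, Measure.rnDeriv_smul_left_of_ne_top (midM P Q) (midM P Q)
    (ENNReal.ofNat_ne_top (n := 2)), Measure.rnDeriv_self (midM P Q),
    Measure.rnDeriv_lt_top P (midM P Q), Measure.rnDeriv_lt_top Q (midM P Q)]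
    with x hsum hsmul hself hP hQ
  rw [← ENNReal.toReal_add hP.ne hQ.ne, ← Pi.add_apply, ← hsum, hsmul, Pi.smul_apply, hself]
  simp

lemma toReal_rnDeriv_midM_mem_Icc [IsFiniteMeasure P] [IsFiniteMeasure Q] :
    ∀ᵐ x ∂midM P Q, (P.rnDeriv (midM P Q) x).toReal ∈ Icc 0 2 := by
  filter_upwards [toReal_rnDeriv_midM_add P Q] with x hx
  exact ⟨ENNReal.toReal_nonneg, by linarith [(Q.rnDeriv (midM P Q) x).toReal_nonneg]⟩

/-- The total variation distance `sup_A |P A - Q A|`, written as `∫ |dP/dM - 1| dM` for the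
mixture `M = midM P Q`; since `dP/dM + dQ/dM = 2`, this is `½ ∫ |dP/dM - dQ/dM| dM`. -/
noncomputable def tvDist : ℝ :=
  ∫ x, |(P.rnDeriv (midM P Q) x).toReal - 1| ∂midM P Q

variable [IsProbabilityMeasure P] [IsProbabilityMeasure Q]

lemma integral_sub_integral_le_tvDist {f : α → ℝ} (hf : Measurable f) (hf0 : ∀ x, 0 ≤ f x)
    (hf1 : ∀ x, f x ≤ 1) : ∫ x, f x ∂P - ∫ x, f x ∂Q ≤ tvDist P Q := by
  set M := midM P Q
  set g := fun x => (P.rnDeriv M x).toReal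
  set h := fun x => (Q.rnDeriv M x).toReal
  have hPM := absolutelyContinuous_midM_left P Q
  have hQM := absolutelyContinuous_midM_right P Q
  have hf_int : ∀ (μ : Measure α) [IsFiniteMeasure μ], Integrable f μ := fun μ _ =>
    .of_bound hf.aestronglyMeasurable 1 (.of_forall fun x => by
      rw [Real.norm_eq_abs, abs_le]; exact ⟨by linarith [hf0 x], hf1 x⟩)
  have hgf : Integrable (fun x => g x * f x) M :=
    (integrable_toReal_rnDeriv_mul_iff hPM).2 (hf_int P)
  have hhf : Integrable (fun x => h x * f x) M :=
    (integrable_toReal_rnDeriv_mul_iff hQM).2 (hf_int Q)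
  have hg_int : Integrable (fun x => g x - 1) M :=
    Measure.integrable_toReal_rnDeriv.sub (integrable_const 1)
  calc ∫ x, f x ∂P - ∫ x, f x ∂Q = ∫ x, g x * f x - h x * f x ∂M := by
        rw [integral_sub hgf hhf, integral_toReal_rnDeriv_mul hPM, integral_toReal_rnDeriv_mul hQM]
    _ ≤ ∫ x, |g x - 1| + (g x - 1) ∂M := by
        refine integral_mono_ae (hgf.sub hhf) (hg_int.abs.add hg_int) ?_
        filter_upwards [toReal_rnDeriv_midM_add P Q] with x hx
        -- as `h x = 2 - g x`, the integrand is `2 f x (g x - 1)`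
        rcases abs_cases (g x - 1) with ⟨habs, hsign⟩ | ⟨habs, hsign⟩ <;>
          nlinarith [hf0 x, hf1 x]
    _ = tvDist P Q := by
        rw [integral_add hg_int.abs hg_int, integral_sub Measure.integrable_toReal_rnDeriv
          (integrable_const 1), Measure.integral_toReal_rnDeriv hPM]
        simp [tvDist, M, g]

lemma sq_tvDist_le_two_mul_jsDiv : tvDist P Q ^ 2 ≤ 2 * jsDiv P Q := by
  set M := midM P Q
  set g := fun x => (P.rnDeriv M x).toReal
  set h := fun x => (Q.rnDeriv M x).toReal
  have hg_meas : AEStronglyMeasurable g M :=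
    (Measure.measurable_rnDeriv P M).ennreal_toReal.aestronglyMeasurable
  have hh_meas : AEStronglyMeasurable h M :=
    (Measure.measurable_rnDeriv Q M).ennreal_toReal.aestronglyMeasurable
  have hg := toReal_rnDeriv_midM_mem_Icc P Q
  have hh : ∀ᵐ x ∂M, h x ∈ Icc 0 2 := by
    simpa only [midM_comm] using toReal_rnDeriv_midM_mem_Icc Q P
  have hg_log := integrable_comp_of_ae_mem_Icc continuous_mul_log hg_meas hg
  have hh_log := integrable_comp_of_ae_mem_Icc continuous_mul_log hh_meas hh
  calc tvDist P Q ^ 2 ≤ ∫ x, |g x - 1| ^ 2 ∂M := by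
        have hu_meas : AEStronglyMeasurable (fun x => |g x - 1|) M :=
          (continuous_abs.comp (continuous_sub_right 1)).comp_aestronglyMeasurable hg_meas
        refine sq_integral_le_integral_sq (.of_bound hu_meas 1 ?_)
        filter_upwards [hg] with x hx
        rw [Real.norm_eq_abs, abs_abs, abs_le]
        constructor <;> linarith [hx.1, hx.2]
    _ ≤ ∫ x, g x * log (g x) + h x * log (h x) ∂M := by
        have hu_sq := integrable_comp_of_ae_mem_Icc (φ := fun t => |t - 1| ^ 2) (by fun_prop)
          hg_meas hg
        refine integral_mono_ae hu_sq (hg_log.add hh_log) ?_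
        filter_upwards [hg, toReal_rnDeriv_midM_add P Q] with x hx hsum
        have := sq_le_klFun_one_add_add_klFun_one_sub (u := g x - 1)
          (abs_le.2 ⟨by linarith [hx.1], by linarith [hx.2]⟩)
        rw [sq_abs]
        simp only [InformationTheory.klFun_apply, add_sub_cancel,
          show 1 - (g x - 1) = h x by simp only [h, g]; linarith] at this
        linarith
    _ = 2 * jsDiv P Q := by
        rw [integral_add hg_log hh_log, jsDiv,
          klDiv_eq_integral_mul_log (absolutelyContinuous_midM_left P Q),
          klDiv_eq_integral_mul_log (absolutelyContinuous_midM_right P Q)]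
        ring

lemma tvDist_le_sqrt_two_mul_jsDist : tvDist P Q ≤ √2 * jsDist P Q := by
  rw [jsDist, ← Real.sqrt_mul zero_le_two]
  exact Real.le_sqrt_of_sq_le (sq_tvDist_le_two_mul_jsDiv P Q)

end

/-- `νi y a` and `νj y a` are the feature distributions `P^{X|Y=y,A=a}` of the domains
`Dᵢ` and `Dⱼ`, and `f1` is the predicted probability `f(X)₁`. -/
theorem stmt11 {𝒳 : Type*} [MeasurableSpace 𝒳]
    (νi νj : Bool → Bool → Measure 𝒳)
    (hνi : ∀ y a, IsProbabilityMeasure (νi y a))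
    (hνj : ∀ y a, IsProbabilityMeasure (νj y a))
    (f1 : 𝒳 → ℝ) (hf : Measurable f1) (hf0 : ∀ x, 0 ≤ f1 x) (hf1 : ∀ x, f1 x ≤ 1) :
    ∀ y a : Bool,
      ∫ x, f1 x ∂(νj y a)
        ≤ ∫ x, f1 x ∂(νi y a) + Real.sqrt 2 * jsDist (νj y a) (νi y a) := by
  intro y a
  have := hνi y a
  have := hνj y a
  linarith [integral_sub_integral_le_tvDist (νj y a) (νi y a) hf hf0 hf1,
    tvDist_le_sqrt_two_mul_jsDist (νj y a) (νi y a)]
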